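/- Let p : ℝ → ℝ be differentiable at c = −2, satisfy f_c³(p(c)) = p(c) for all c in some neighborhood of −2, and satisfy p(−2) = 2 cos(4π/7). Then the function c ↦ 8 p(c) (p(c)² + c) ((p(c)² + c)² + c), which gives the derivative of f_c³ at the periodic point p(c), is differentiable at −2 and its derivative at −2 equals −16. -/

import Mathlib

/-!
Write `x = p c`, `y = f_c x`, `z = f_c y`, so that `f_c z = x` near `c = -2`. Differentiating this
3-cycle in `c` gives `p' = 1 + 2z + 4yz + 8xyz p'`. At `c = -2` the cycle is
`2 cos (4π/7) ↦ 2 cos (8π/7) ↦ 2 cos (2π/7)`, the three roots of `t³ + t² - 2t - 1`; hence `xyz = 1`,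
the multiplier `8xyz` equals `8`, and `p'(-2) = -(1 + 2z + 4yz) / 7`. Feeding this into the
product rule for `8xyz` and reducing modulo the cubic leaves `-16`.
-/

open Real Filter

/-- The quadratic map `f_c(x) = x² + c`. -/
def fc (c : ℝ) : ℝ → ℝ := fun x => x ^ 2 + c

open Function Topology

lemma two_cos_cubic_of_cos_four_mul_eq (θ : ℝ) (h : cos (4 * θ) = cos (3 * θ))
    (hθ : cos θ ≠ 1) :
    (2 * cos θ) ^ 3 + (2 * cos θ) ^ 2 - 2 * (2 * cos θ) - 1 = 0 := by
  rw [show 4 * θ = 2 * (2 * θ) by ring, cos_two_mul, cos_two_mul, cos_three_mul] at h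
  have hfac : (cos θ - 1) * ((2 * cos θ) ^ 3 + (2 * cos θ) ^ 2 - 2 * (2 * cos θ) - 1) = 0 := by
    linear_combination h
  exact (mul_eq_zero.mp hfac).resolve_left (sub_ne_zero.mpr hθ)

lemma two_cos_four_pi_div_seven_cubic :
    (2 * cos (4 * π / 7)) ^ 3 + (2 * cos (4 * π / 7)) ^ 2 - 2 * (2 * cos (4 * π / 7)) - 1 = 0 := by
  apply two_cos_cubic_of_cos_four_mul_eq
  · rw [show 4 * (4 * π / 7) = (2 : ℕ) * (2 * π) - 3 * (4 * π / 7) by push_cast; ring,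
      cos_nat_mul_two_pi_sub]
  · have hneg : cos (4 * π / 7) < 0 :=
      cos_neg_of_pi_div_two_lt_of_lt (by linarith [pi_pos]) (by linarith [pi_pos])
    exact (hneg.trans one_pos).ne

lemma HasDerivAt.fc_comp {g : ℝ → ℝ} {g' c₀ : ℝ} (hg : HasDerivAt g g' c₀) :
    HasDerivAt (fun c => fc c (g c)) (2 * g c₀ * g' + 1) c₀ :=
  ((hg.fun_pow 2).add (hasDerivAt_id' c₀)).congr_deriv (by ring)

lemma HasDerivAt.eq_of_eventually_isPeriodicPt_three {p : ℝ → ℝ} {q c₀ : ℝ}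
    (hp : HasDerivAt p q c₀) (hper : ∀ᶠ c in 𝓝 c₀, IsPeriodicPt (fc c) 3 (p c)) :
    q = 2 * fc c₀ (fc c₀ (p c₀)) * (2 * fc c₀ (p c₀) * (2 * p c₀ * q + 1) + 1) + 1 :=
  ((hp.fc_comp.fc_comp.fc_comp.congr_of_eventuallyEq
    (hper.mono fun _ hc => hc.symm)).unique hp).symm

lemma HasDerivAt.multiplier_three {p : ℝ → ℝ} {q c₀ : ℝ} (hp : HasDerivAt p q c₀) :
    HasDerivAt (fun c => 8 * p c * fc c (p c) * fc c (fc c (p c)))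
      ((8 * q * fc c₀ (p c₀) + 8 * p c₀ * (2 * p c₀ * q + 1)) * fc c₀ (fc c₀ (p c₀))
        + 8 * p c₀ * fc c₀ (p c₀) * (2 * fc c₀ (p c₀) * (2 * p c₀ * q + 1) + 1)) c₀ :=
  ((hp.const_mul 8).mul hp.fc_comp).mul hp.fc_comp.fc_comp

lemma multiplier_deriv_eq_neg_sixteen {x q : ℝ} (hx : x ^ 3 + x ^ 2 - 2 * x - 1 = 0)
    (hq : q = 2 * fc (-2) (fc (-2) x) * (2 * fc (-2) x * (2 * x * q + 1) + 1) + 1) :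
    (8 * q * fc (-2) x + 8 * x * (2 * x * q + 1)) * fc (-2) (fc (-2) x)
      + 8 * x * fc (-2) x * (2 * fc (-2) x * (2 * x * q + 1) + 1) = -16 := by
  set y := fc (-2) x with hy
  set z := fc (-2) y with hz
  simp only [fc] at hy hz
  have hprod : x * y * z = 1 := by grind
  have hq' : 7 * q = -(1 + 2 * z + 4 * y * z) := by linear_combination -hq - 8 * q * hprod
  grind

theorem stmt_10 (p : ℝ → ℝ)
    (hp : DifferentiableAt ℝ p (-2))
    (hpfix : ∀ᶠ c in nhds (-2 : ℝ), (fc c)^[3] (p c) = p c)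
    (hpval : p (-2) = 2 * Real.cos (4 * π / 7)) :
    DifferentiableAt ℝ
      (fun c => 8 * p c * ((p c) ^ 2 + c) * (((p c) ^ 2 + c) ^ 2 + c)) (-2) ∧
    deriv (fun c => 8 * p c * ((p c) ^ 2 + c) * (((p c) ^ 2 + c) ^ 2 + c)) (-2) = -16 := by
  have hq := hp.hasDerivAt
  have hmult := hq.multiplier_three
  have hcubic : p (-2) ^ 3 + p (-2) ^ 2 - 2 * p (-2) - 1 = 0 :=
    hpval ▸ two_cos_four_pi_div_seven_cubic
  exact ⟨hmult.differentiableAt, hmult.deriv.trans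
    (multiplier_deriv_eq_neg_sixteen hcubic (hq.eq_of_eventually_isPeriodicPt_three hpfix))⟩
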